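/- arXiv:0806.4208 — 3 statements merged into one kernel-verified Lean document; each statement's English description precedes it below -/
import Mathlib

section
/- If a set S of vertices from the three-column construction is contained in two adjacent columns (left column L and right column R, where R is immediately to the right of L), every vertex of S in L except possibly the lowest one is colored red, and every vertex of S in R except possibly the lowest one is colored blue, then no three vertices of S form a triangle of the complex. -/
/-- The missing-triangle predicate of Construction 1.  Vertices live in a linearly
ordered type; `col v` is the (cyclically arranged) column of `v`, with the column to
the right of `c` being `c + 1` and the column to the left being `c + 2`; `red v = true`
means `v` is colored red, `red v = false` means blue.  The predicate is to be applied
to triples with `z < y < x` and expresses that `{x, y, z}` is one of the four missing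
types:
1. three vertices in one column with the top two of the same color;
2. two vertices in one column with the higher of the two red, and one vertex in the
   column to its right;
3. two vertices in one column with the higher of the two blue, and one vertex in the
   column to its left;
4. two vertices in one column and one in another, the highest vertex in the left column
   (of the two columns involved) blue, the highest vertex in the right column red, and
   the two lowest vertices in the same column. -/
def MissingTriple {α : Type*} (col : α → Fin 3) (red : α → Bool) (x y z : α) : Prop :=
  -- type 1
  (col x = col y ∧ col y = col z ∧ red x = red y) ∨
  -- type 2
  ((col x = col y ∧ col z = col x + 1 ∧ red x = true) ∨
   (col x = col z ∧ col y = col x + 1 ∧ red x = true) ∨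
   (col y = col z ∧ col x = col y + 1 ∧ red y = true)) ∨
  -- type 3
  ((col x = col y ∧ col z = col x + 2 ∧ red x = false) ∨
   (col x = col z ∧ col y = col x + 2 ∧ red x = false) ∨
   (col y = col z ∧ col x = col y + 2 ∧ red y = false)) ∨
  -- type 4
  (col y = col z ∧ col x ≠ col y ∧
    ((col x = col y + 1 ∧ red y = false ∧ red x = true) ∨
     (col y = col x + 1 ∧ red x = false ∧ red y = true)))

/-- Lemma `emptyexist`: if a set `S` of vertices of a Construction 1 complex is
contained in two adjacent columns `L` and `L + 1`, every vertex of `S` in the left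
column `L` except possibly the lowest is red, and every vertex of `S` in the right
column `L + 1` except possibly the lowest is blue, then no three vertices of `S` form a
triangle of the complex (i.e. every triple of `S` is a missing triangle). -/
theorem no_triangle_of_red_left_blue_right {n : ℕ}
    (col : Fin n → Fin 3) (red : Fin n → Bool) (S : Finset (Fin n)) (L : Fin 3)
    (hcols : ∀ v ∈ S, col v = L ∨ col v = L + 1)
    (hred : ∀ v ∈ S, col v = L → (∃ w ∈ S, col w = L ∧ w < v) → red v = true)
    (hblue : ∀ v ∈ S, col v = L + 1 → (∃ w ∈ S, col w = L + 1 ∧ w < v) → red v = false) :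
    ∀ x ∈ S, ∀ y ∈ S, ∀ z ∈ S, z < y → y < x → MissingTriple col red x y z := by
  have hL : L + 1 + 2 = L := by
    rw [add_assoc, show (1:Fin 3)+2 = 0 from rfl, add_zero]
  intro x hx y hy z hz hzy hyx
  rcases hcols x hx with cx | cx <;> rcases hcols y hy with cy | cy <;>
    rcases hcols z hz with cz | cz
  · exact Or.inl ⟨by rw [cx, cy], by rw [cy, cz],
      by rw [hred x hx cx ⟨y, hy, cy, hyx⟩, hred y hy cy ⟨z, hz, cz, hzy⟩]⟩
  · exact Or.inr (Or.inl (Or.inl ⟨by rw [cx, cy], by rw [cz, cx],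
      hred x hx cx ⟨y, hy, cy, hyx⟩⟩))
  · exact Or.inr (Or.inl (Or.inr (Or.inl ⟨by rw [cx, cz], by rw [cy, cx],
      hred x hx cx ⟨z, hz, cz, hzy.trans hyx⟩⟩)))
  · exact Or.inr (Or.inr (Or.inl (Or.inr (Or.inr ⟨by rw [cy, cz], by rw [cx, cy, hL],
      hblue y hy cy ⟨z, hz, cz, hzy⟩⟩))))
  · exact Or.inr (Or.inl (Or.inr (Or.inr ⟨by rw [cy, cz], by rw [cx, cy],
      hred y hy cy ⟨z, hz, cz, hzy⟩⟩)))
  · exact Or.inr (Or.inr (Or.inl (Or.inr (Or.inl ⟨by rw [cx, cz], by rw [cy, cx, hL],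
      hblue x hx cx ⟨z, hz, cz, hzy.trans hyx⟩⟩))))
  · exact Or.inr (Or.inr (Or.inl (Or.inl ⟨by rw [cx, cy], by rw [cz, cx, hL],
      hblue x hx cx ⟨y, hy, cy, hyx⟩⟩)))
  · exact Or.inl ⟨by rw [cx, cy], by rw [cy, cz],
      by rw [hblue x hx cx ⟨y, hy, cy, hyx⟩, hblue y hy cy ⟨z, hz, cz, hzy⟩]⟩
end

section
/- Let n = 3k+1 or n = 3k+2 and consider a complex of Construction 4 (Construction 3 with the coloring conditions). For every j with 1 ≤ j ≤ k, after removing the bottom j rows, each of the three color sets (all red vertices of one column together with all blue vertices of the column to its right) has size either k−j or k−j+1. -/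
/-- Construction 3: `n` vertices arranged in 3 columns and `⌈n/3⌉` rows (rows indexed
from the bottom, row `i`, column `c` is the pair `(i, c)`), with all spots below the
top row occupied, a total order on the vertices (given by the rank function `ord`)
refining the row order, and a red/blue coloring.  The faces are as in Construction 1:
all vertices, all edges, and all triples except the missing triangles. -/
structure Cons3 (n : ℕ) where
  /-- The occupied positions (the vertices). -/
  V : Finset (ℕ × Fin 3)
  /-- The coloring: `true` = red, `false` = blue. -/
  red : ℕ × Fin 3 → Bool
  /-- The rank of a vertex in the total order. -/
  ord : ℕ × Fin 3 → ℕ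
  card_V : V.card = n
  mem_rows : ∀ p ∈ V, p.1 < (n + 2) / 3
  full : ∀ i, i + 1 < (n + 2) / 3 → ∀ c, (i, c) ∈ V
  ord_inj : ∀ p ∈ V, ∀ q ∈ V, ord p = ord q → p = q
  ord_row : ∀ p ∈ V, ∀ q ∈ V, p.1 < q.1 → ord p < ord q

namespace Cons3

variable {n : ℕ} (C : Cons3 n)

/-- `p` is lower than `q` in the total order. -/
def lt (p q : ℕ × Fin 3) : Prop := C.ord p < C.ord q

/-- A 3-set of vertices is a triangle of the complex iff it is not a missing triple. -/
def IsTriangleOf (s : Finset (ℕ × Fin 3)) : Prop :=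
  ∃ x y z : ℕ × Fin 3, C.lt z y ∧ C.lt y x ∧ s = {x, y, z} ∧
    ¬ MissingTriple Prod.snd C.red x y z

open Classical in
/-- The number of triangles of the complex. -/
noncomputable def numTriangles : ℕ :=
  ((C.V.powersetCard 3).filter fun s => C.IsTriangleOf s).card

/-- The color set of column `c`: the red vertices of column `c` together with the blue
vertices of the column `c + 1` to its right. -/
def colorSet (c : Fin 3) : Finset (ℕ × Fin 3) :=
  C.V.filter fun p => (p.2 = c ∧ C.red p = true) ∨ (p.2 = c + 1 ∧ C.red p = false)

/-- The part of the color set of column `c` remaining after the bottom `j` rows are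
removed. -/
def colorSetAbove (j : ℕ) (c : Fin 3) : Finset (ℕ × Fin 3) :=
  (C.colorSet c).filter fun p => j ≤ p.1

/-- The number of red vertices of column `c` among the top `j` rows. -/
def redTop (j : ℕ) (c : Fin 3) : ℕ :=
  (C.V.filter fun p => p.2 = c ∧ C.red p = true ∧ (n + 2) / 3 ≤ p.1 + j).card

/-- The coloring conditions of Construction 4.  If `n = 3k`, every row is
monochromatic.  If `n = 3k + 1`, for every `j ≤ k`, restricting to the top `j` rows,
each column has at most as many red vertices as the column to its left (`c + 2`),
except that the column `c₀` containing the top vertex may have one more.  If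
`n = 3k + 2`, for every `j ≤ k`, restricting to the top `j` rows, each column has at
least as many red vertices as the column to its left, except that the column `cₑ`
without a vertex in the top row may have one fewer. -/
def Cond4 : Prop :=
  if n % 3 = 0 then
    ∀ p ∈ C.V, ∀ q ∈ C.V, p.1 = q.1 → C.red p = C.red q
  else if n % 3 = 1 then
    ∃ c₀ : Fin 3, ((n + 2) / 3 - 1, c₀) ∈ C.V ∧
      (∀ c, c ≠ c₀ → ((n + 2) / 3 - 1, c) ∉ C.V) ∧
      ∀ j ≤ n / 3, ∀ c : Fin 3,
        C.redTop j c ≤ C.redTop j (c + 2) + (if c = c₀ then 1 else 0)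
  else
    ∃ cₑ : Fin 3, ((n + 2) / 3 - 1, cₑ) ∉ C.V ∧
      (∀ c, c ≠ cₑ → ((n + 2) / 3 - 1, c) ∈ C.V) ∧
      ∀ j ≤ n / 3, ∀ c : Fin 3,
        C.redTop j (c + 2) ≤ C.redTop j c + (if c = cₑ then 1 else 0)

/-- An empty cluster: a set of more than one third of the vertices containing no
triangle of the complex, any proper superset of which (within the vertex set) contains
a triangle. -/
def EmptyCluster (S : Finset (ℕ × Fin 3)) : Prop :=
  S ⊆ C.V ∧ n < 3 * S.card ∧
    (∀ x ∈ S, ∀ y ∈ S, ∀ z ∈ S, C.lt z y → C.lt y x →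
      MissingTriple Prod.snd C.red x y z) ∧
    ∀ v ∈ C.V, v ∉ S →
      ∃ x ∈ insert v S, ∃ y ∈ insert v S, ∃ z ∈ insert v S,
        C.lt z y ∧ C.lt y x ∧ ¬ MissingTriple Prod.snd C.red x y z

/-- An empty core: an intersection of one or more empty clusters of a common size `m`,
containing at least two vertices, such that any other empty cluster of size at least
`m` contains at most one of its vertices. -/
def EmptyCore (E : Finset (ℕ × Fin 3)) : Prop :=
  ∃ m : ℕ, ∃ 𝒮 : Finset (Finset (ℕ × Fin 3)), ∃ h𝒮 : 𝒮.Nonempty,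
    (∀ S ∈ 𝒮, C.EmptyCluster S ∧ S.card = m) ∧
    E = 𝒮.inf' h𝒮 id ∧ 2 ≤ E.card ∧
    ∀ S', C.EmptyCluster S' → m ≤ S'.card → S' ∉ 𝒮 → (S' ∩ E).card ≤ 1

/-- The first exceptional construction: `n = 3k + 1` and the unique blue vertex is in
the second row from the top, in the column `c₀` containing the top vertex, and higher
than the red vertex to its right. -/
def Exceptional1 : Prop :=
  n % 3 = 1 ∧ ∃ p ∈ C.V, C.red p = false ∧ (∀ q ∈ C.V, C.red q = false → q = p) ∧
    ∃ c₀ : Fin 3, ((n + 2) / 3 - 1, c₀) ∈ C.V ∧ p.1 + 2 = (n + 2) / 3 ∧ p.2 = c₀ ∧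
      C.lt (p.1, c₀ + 1) p

/-- The second exceptional construction: `n = 3k + 2` and all vertices outside the top
row are blue. -/
def Exceptional2 : Prop :=
  n % 3 = 2 ∧ ∀ p ∈ C.V, p.1 + 1 < (n + 2) / 3 → C.red p = false

end Cons3

section Aux

open Classical

variable {n k : ℕ} (C : Cons3 n)

/-- Number of vertices of column `c` in rows `≥ j`. -/
lemma aux_col_count (hr : (n + 2) / 3 = k + 1) {j : ℕ} (hj : j ≤ k) (c : Fin 3) :
    (C.V.filter fun p => p.2 = c ∧ j ≤ p.1).card
      = (k - j) + (if (k, c) ∈ C.V then 1 else 0) := by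
  classical
  have hinj : Function.Injective (fun i : ℕ => (i, c)) := by
    intro a b hab
    exact (Prod.mk.injEq _ _ _ _ ▸ hab).1
  have hdisj : Disjoint ((Finset.Ico j k).image fun i => (i, c))
      (if (k, c) ∈ C.V then ({(k, c)} : Finset (ℕ × Fin 3)) else ∅) := by
    split
    · simp only [Finset.disjoint_singleton_right, Finset.mem_image, Finset.mem_Ico]
      rintro ⟨i, ⟨_, hik⟩, hi⟩
      have := congrArg Prod.fst hi
      simp only at this
      omega
    · simp
  have hset : C.V.filter (fun p => p.2 = c ∧ j ≤ p.1)
      = ((Finset.Ico j k).image fun i => (i, c)) ∪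
        (if (k, c) ∈ C.V then ({(k, c)} : Finset (ℕ × Fin 3)) else ∅) := by
    ext p
    simp only [Finset.mem_filter, Finset.mem_union, Finset.mem_image, Finset.mem_Ico]
    constructor
    · rintro ⟨hpV, hpc, hpj⟩
      have hlt : p.1 < k + 1 := hr ▸ C.mem_rows p hpV
      rcases Nat.lt_or_ge p.1 k with h | h
      · left; exact ⟨p.1, ⟨hpj, h⟩, by rw [← hpc]⟩
      · right
        have hp : p = (k, c) := by
          have h1 : p.1 = k := by omega
          rw [← h1, ← hpc]
        rw [hp] at hpV ⊢
        simp [hpV]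
    · intro h
      rcases h with ⟨i, ⟨hji, hik⟩, rfl⟩ | h
      · exact ⟨C.full i (by omega) c, rfl, hji⟩
      · by_cases hkc : (k, c) ∈ C.V
        · rw [if_pos hkc, Finset.mem_singleton] at h
          subst h
          exact ⟨hkc, rfl, hj⟩
        · rw [if_neg hkc] at h
          simp at h
  rw [hset, Finset.card_union_of_disjoint hdisj,
    Finset.card_image_of_injective _ hinj, Nat.card_Ico]
  congr 1
  split <;> simp

/-- Red/blue split of a column. -/
lemma aux_rb (j : ℕ) (c : Fin 3) :
    (C.V.filter fun p => p.2 = c ∧ C.red p = true ∧ j ≤ p.1).card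
      + (C.V.filter fun p => p.2 = c ∧ C.red p = false ∧ j ≤ p.1).card
      = (C.V.filter fun p => p.2 = c ∧ j ≤ p.1).card := by
  classical
  rw [← Finset.card_union_of_disjoint (by
    simp only [Finset.disjoint_left, Finset.mem_filter]
    rintro p ⟨_, _, h1, _⟩ ⟨_, _, h2, _⟩
    rw [h1] at h2
    exact absurd h2 (by simp))]
  congr 1
  ext p
  simp only [Finset.mem_union, Finset.mem_filter]
  rcases Bool.eq_false_or_eq_true (C.red p) with h | h <;> simp [h]

/-- Splitting a color set above row `j` by columns. -/
lemma aux_csa (j : ℕ) (c : Fin 3) :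
    (C.colorSetAbove j c).card
      = (C.V.filter fun p => p.2 = c ∧ C.red p = true ∧ j ≤ p.1).card
        + (C.V.filter fun p => p.2 = c + 1 ∧ C.red p = false ∧ j ≤ p.1).card := by
  classical
  have hne : c ≠ c + 1 := by
    have : ∀ a : Fin 3, a ≠ a + 1 := by decide
    exact this c
  rw [← Finset.card_union_of_disjoint (by
    simp only [Finset.disjoint_left, Finset.mem_filter]
    rintro p ⟨_, h1, _, _⟩ ⟨_, h2, _, _⟩
    rw [h1] at h2
    exact hne h2)]
  congr 1
  unfold Cons3.colorSetAbove Cons3.colorSet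
  rw [Finset.filter_filter]
  ext p
  simp only [Finset.mem_union, Finset.mem_filter]
  constructor
  · rintro ⟨hpV, hor, hj⟩
    rcases hor with ⟨h1, h2⟩ | ⟨h1, h2⟩
    · exact Or.inl ⟨hpV, h1, h2, hj⟩
    · exact Or.inr ⟨hpV, h1, h2, hj⟩
  · rintro (⟨hpV, h1, h2, hj⟩ | ⟨hpV, h1, h2, hj⟩)
    · exact ⟨hpV, Or.inl ⟨h1, h2⟩, hj⟩
    · exact ⟨hpV, Or.inr ⟨h1, h2⟩, hj⟩

/-- `redTop (k + 1 - j)` counts the red vertices in rows `≥ j`. -/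
lemma aux_redTop (hr : (n + 2) / 3 = k + 1) {j : ℕ} (hjk : j ≤ k) (c : Fin 3) :
    C.redTop (k + 1 - j) c
      = (C.V.filter fun p => p.2 = c ∧ C.red p = true ∧ j ≤ p.1).card := by
  classical
  unfold Cons3.redTop
  congr 1
  apply Finset.filter_congr
  intro p hp
  have hlt : p.1 < (n + 2) / 3 := C.mem_rows p hp
  rw [hr] at hlt ⊢
  constructor <;> rintro ⟨h1, h2, h3⟩ <;> exact ⟨h1, h2, by omega⟩

end Aux

/-- Lemma `redbluesplit`: in a complex of Construction 4 with `n = 3k + 1` or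
`n = 3k + 2` vertices, for every `j` with `1 ≤ j ≤ k`, after removing the bottom `j`
rows each of the three color sets has size `k − j` or `k − j + 1`. -/
theorem colorSet_size_after_removing_rows (n k : ℕ) (hk : 1 ≤ k)
    (hn : n = 3 * k + 1 ∨ n = 3 * k + 2) (C : Cons3 n) (h4 : C.Cond4) :
    ∀ j, 1 ≤ j → j ≤ k → ∀ c : Fin 3,
      (C.colorSetAbove j c).card = k - j ∨ (C.colorSetAbove j c).card = k - j + 1 := by
  classical
  intro j hj1 hjk c
  have hr : (n + 2) / 3 = k + 1 := by omega
  have hk3 : n / 3 = k := by omega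
  set R : Fin 3 → ℕ := fun c => C.redTop (k + 1 - j) c with hR
  -- basic Fin 3 arithmetic facts
  have f1 : ∀ a : Fin 3, a + 1 + 1 = a + 2 := by decide
  have f2 : ∀ a : Fin 3, a + 1 + 2 = a := by decide
  have f3 : ∀ a : Fin 3, a + 2 + 1 = a := by decide
  have f4 : ∀ a : Fin 3, a + 2 + 2 = a + 1 := by decide
  have fne1 : ∀ a : Fin 3, a + 1 ≠ a := by decide
  have fne2 : ∀ a : Fin 3, a + 2 ≠ a := by decide
  have fne3 : ∀ a : Fin 3, a + 1 ≠ a + 2 := by decide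
  have ftri : ∀ a b : Fin 3, b = a ∨ b = a + 1 ∨ b = a + 2 := by decide
  have hcard : ∀ c' : Fin 3, (C.colorSetAbove j c').card + R (c' + 1)
      = R c' + (k - j) + (if (k, c' + 1) ∈ C.V then 1 else 0) := by
    intro c'
    have h1 := aux_csa C j c'
    have h2 := aux_rb C j (c' + 1)
    have h3 := aux_col_count C hr hjk (c' + 1)
    have h4 := aux_redTop C hr hjk c'
    have h5 := aux_redTop C hr hjk (c' + 1)
    simp only [hR]
    omega
  unfold Cons3.Cond4 at h4
  rw [if_neg (by omega : ¬ n % 3 = 0)] at h4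
  have hjle : k + 1 - j ≤ n / 3 := by omega
  rcases hn with hn1 | hn2
  · -- case n = 3k + 1
    rw [if_pos (by omega)] at h4
    obtain ⟨c₀, hmem, honly, hineq⟩ := h4
    rw [show (n + 2) / 3 - 1 = k by omega] at hmem honly
    have hmemiff : ∀ c' : Fin 3, ((k, c') ∈ C.V) ↔ c' = c₀ := by
      intro c'
      constructor
      · intro h; by_contra hne; exact honly c' hne h
      · rintro rfl; exact hmem
    have hI : ∀ c' : Fin 3, R c' ≤ R (c' + 2) + (if c' = c₀ then 1 else 0) :=
      fun c' => hineq (k + 1 - j) hjle c'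
    have hE : ∀ c' : Fin 3, (C.colorSetAbove j c').card + R (c' + 1)
        = R c' + (k - j) + (if c' + 1 = c₀ then 1 else 0) := by
      intro c'
      rw [hcard c']
      congr 1
      by_cases h : c' + 1 = c₀
      · rw [if_pos ((hmemiff _).2 h), if_pos h]
      · rw [if_neg (fun hm => h ((hmemiff _).1 hm)), if_neg h]
    have e0 := hE c
    have e1 := hE (c + 1)
    have e2 := hE (c + 2)
    have i0 := hI c
    have i1 := hI (c + 1)
    have i2 := hI (c + 2)
    rw [f1 c] at e1
    rw [f3 c] at e2
    rw [f2 c] at i1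
    rw [f4 c] at i2
    rcases ftri c c₀ with h | h | h <;> rw [h] at e0 e1 e2 i0 i1 i2
    · rw [if_neg (fne1 c)] at e0
      rw [if_neg (fne2 c)] at e1
      rw [if_pos rfl] at e2
      rw [if_pos rfl] at i0
      rw [if_neg (fne1 c)] at i1
      rw [if_neg (fne2 c)] at i2
      omega
    · rw [if_pos rfl] at e0
      rw [if_neg (fun h => fne3 c h.symm)] at e1
      rw [if_neg (fun h => fne1 c h.symm)] at e2
      rw [if_neg (fun h => fne1 c h.symm)] at i0
      rw [if_pos rfl] at i1
      rw [if_neg (fun h => fne3 c h.symm)] at i2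
      omega
    · rw [if_neg (fne3 c)] at e0
      rw [if_pos rfl] at e1
      rw [if_neg (fun h => fne2 c h.symm)] at e2
      rw [if_neg (fun h => fne2 c h.symm)] at i0
      rw [if_neg (fne3 c)] at i1
      rw [if_pos rfl] at i2
      omega
  · -- case n = 3k + 2
    rw [if_neg (show ¬ n % 3 = 1 by omega)] at h4
    obtain ⟨cₑ, hnot, hmem, hineq⟩ := h4
    rw [show (n + 2) / 3 - 1 = k by omega] at hnot hmem
    have hmemiff : ∀ c' : Fin 3, ((k, c') ∈ C.V) ↔ c' ≠ cₑ := by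
      intro c'
      constructor
      · intro h hne; rw [hne] at h; exact hnot h
      · exact hmem c'
    have hI : ∀ c' : Fin 3, R (c' + 2) ≤ R c' + (if c' = cₑ then 1 else 0) :=
      fun c' => hineq (k + 1 - j) hjle c'
    have hE : ∀ c' : Fin 3, (C.colorSetAbove j c').card + R (c' + 1)
        = R c' + (k - j) + (if c' + 1 = cₑ then 0 else 1) := by
      intro c'
      rw [hcard c']
      congr 1
      by_cases h : c' + 1 = cₑ
      · rw [if_neg (fun hm => ((hmemiff _).1 hm) h), if_pos h]
      · rw [if_pos ((hmemiff _).2 h), if_neg h]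
    have e0 := hE c
    have e1 := hE (c + 1)
    have e2 := hE (c + 2)
    have i0 := hI c
    have i1 := hI (c + 1)
    have i2 := hI (c + 2)
    rw [f1 c] at e1
    rw [f3 c] at e2
    rw [f2 c] at i1
    rw [f4 c] at i2
    rcases ftri c cₑ with h | h | h <;> rw [h] at e0 e1 e2 i0 i1 i2
    · rw [if_neg (fne1 c)] at e0
      rw [if_neg (fne2 c)] at e1
      rw [if_pos rfl] at e2
      rw [if_pos rfl] at i0
      rw [if_neg (fne1 c)] at i1
      rw [if_neg (fne2 c)] at i2
      omega
    · rw [if_pos rfl] at e0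
      rw [if_neg (fun h => fne3 c h.symm)] at e1
      rw [if_neg (fun h => fne1 c h.symm)] at e2
      rw [if_neg (fun h => fne1 c h.symm)] at i0
      rw [if_pos rfl] at i1
      rw [if_neg (fun h => fne3 c h.symm)] at i2
      omega
    · rw [if_neg (fne3 c)] at e0
      rw [if_pos rfl] at e1
      rw [if_neg (fun h => fne2 c h.symm)] at e2
      rw [if_neg (fun h => fne2 c h.symm)] at i0
      rw [if_neg (fne3 c)] at i1
      rw [if_pos rfl] at i2
      omega
end

section
/- In a complex of Construction 4 with n = 3k+1 or 3k+2 and k ≥ 2, every empty cluster (a set of more than n/3 vertices containing no triangle, maximal with this property) has vertices in exactly two columns; moreover in each of its two columns, all of its vertices except possibly the lowest share a single color; and if both columns contain at least two vertices of the cluster, then the left column's color is red and the right column's color is blue. -/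
/-!
Three vertices of an empty cluster never lie in three different columns, because no missing
triangle does.  Among the vertices of one column, any two non-lowest ones `p < p'` form a
missing triangle with a lower vertex, whose top two must share a color.  A cluster inside a
single column is not maximal: if its upper color is red, a vertex of the column to the right
can be added (missing type 2), if blue, one of the column to the left (type 3).  When both
columns `c` and `c + 1` hold two vertices, comparing an upper vertex of column `c` with the
two lowest vertices of column `c + 1` forces it to be red.  Every statement has a mirror image
under reflecting the columns and swapping the colors, which preserves the missing triangles.
-/

namespace MissingTriple

variable {α : Type*} {col : α → Fin 3} {red : α → Bool} {x y z : α}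

instance (col : α → Fin 3) (red : α → Bool) (x y z : α) :
    Decidable (MissingTriple col red x y z) := by
  unfold MissingTriple; infer_instance

theorem iff_pattern :
    MissingTriple col red x y z ↔
      MissingTriple Prod.fst Prod.snd (col x, red x) (col y, red y) (col z, red z) :=
  Iff.rfl

theorem col_eq_or (h : MissingTriple col red x y z) :
    col x = col y ∨ col x = col z ∨ col y = col z := by
  unfold MissingTriple at h
  grind

theorem neg_not_iff :
    MissingTriple (fun p => -col p) (fun p => !red p) x y z ↔ MissingTriple col red x y z := by
  rw [iff_pattern, iff_pattern (x := x)]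
  generalize col x = a, col y = b, col z = c, red x = r, red y = s, red z = t
  revert a b c r s t
  decide

theorem red_eq_of_col_eq (hxy : col y = col x) (hxz : col z = col x)
    (h : MissingTriple col red x y z) : red x = red y := by
  unfold MissingTriple at h
  grind

theorem red_of_col_col_right (hy : col y = col x) (hz : col z = col x + 1)
    (h : MissingTriple col red x y z) : red x = true := by
  unfold MissingTriple at h
  grind

theorem red_of_col_right_col (hy : col y = col x + 1) (hz : col z = col x)
    (h : MissingTriple col red x y z) : red x = true := by
  unfold MissingTriple at h
  grind

theorem blue_of_col_col_left (hy : col y = col x) (hz : col x = col z + 1)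
    (h : MissingTriple col red x y z) : red x = false := by
  unfold MissingTriple at h
  grind

theorem red_of_blue_right (hx : col x = col y + 1) (hz : col z = col y) (hbx : red x = false)
    (h : MissingTriple col red x y z) : red y = true := by
  unfold MissingTriple at h
  grind

end MissingTriple

section TriangleFree

variable {α : Type*} (col : α → Fin 3) (red : α → Bool) (ord : α → ℕ)

def TriangleFree (S : Finset α) : Prop :=
  ∀ x ∈ S, ∀ y ∈ S, ∀ z ∈ S, ord z < ord y → ord y < ord x → MissingTriple col red x y z

def UpperColor (S : Finset α) (a : Fin 3) (b : Bool) : Prop :=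
  ∀ p ∈ S, col p = a → (∃ q ∈ S, col q = a ∧ ord q < ord p) → red p = b

variable {col red ord} {S : Finset α} {a : Fin 3}

theorem triangleFree_neg_not_iff :
    TriangleFree (fun p => -col p) (fun p => !red p) ord S ↔ TriangleFree col red ord S := by
  simp only [TriangleFree, MissingTriple.neg_not_iff]

theorem upperColor_neg_not_iff {b : Bool} :
    UpperColor (fun p => -col p) (fun p => !red p) ord S (-a) (!b) ↔
      UpperColor col red ord S a b := by
  simp only [UpperColor, neg_inj, Bool.not_inj_iff]

theorem exists_lt_of_two_le_card (hinj : Set.InjOn ord S)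
    (h : 2 ≤ (S.filter fun p => col p = a).card) :
    ∃ r₁ ∈ S, ∃ r₂ ∈ S, col r₁ = a ∧ col r₂ = a ∧ ord r₁ < ord r₂ := by
  obtain ⟨r₁, hr₁, r₂, hr₂, hne⟩ := Finset.one_lt_card.mp h
  rw [Finset.mem_filter] at hr₁ hr₂
  rcases (hinj.ne hr₁.1 hr₂.1 hne).lt_or_gt with hlt | hlt
  · exact ⟨r₁, hr₁.1, r₂, hr₂.1, hr₁.2, hr₂.2, hlt⟩
  · exact ⟨r₂, hr₂.1, r₁, hr₁.1, hr₂.2, hr₁.2, hlt⟩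

namespace TriangleFree

theorem not_three_cols (hS : TriangleFree col red ord S) (hinj : Set.InjOn ord S) {p q r : α}
    (hp : p ∈ S) (hq : q ∈ S) (hr : r ∈ S)
    (hpq : col p ≠ col q) (hpr : col p ≠ col r) (hqr : col q ≠ col r) : False := by
  have two_cols : ∀ x ∈ S, ∀ y ∈ S, ∀ z ∈ S, ord z < ord y → ord y < ord x →
      col x = col y ∨ col x = col z ∨ col y = col z :=
    fun x hx y hy z hz hzy hyx => (hS x hx y hy z hz hzy hyx).col_eq_or
  have h₁ := hinj.ne hp hq (fun h => hpq (congrArg col h))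
  have h₂ := hinj.ne hp hr (fun h => hpr (congrArg col h))
  have h₃ := hinj.ne hq hr (fun h => hqr (congrArg col h))
  grind

theorem exists_upperColor (hS : TriangleFree col red ord S) (hinj : Set.InjOn ord S)
    (a : Fin 3) : ∃ b, UpperColor col red ord S a b := by
  by_cases h : ∃ p' ∈ S, col p' = a ∧ ∃ q' ∈ S, col q' = a ∧ ord q' < ord p'
  · obtain ⟨p', hp', hp'a, q', hq', hq'a, hq'p'⟩ := h
    refine ⟨red p', fun p hp hpa ⟨q, hq, hqa, hqp⟩ => ?_⟩
    rcases lt_trichotomy (ord p) (ord p') with hlt | heq | hgt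
    · exact ((hS p' hp' p hp q hq hqp hlt).red_eq_of_col_eq (hpa.trans hp'a.symm)
        (hqa.trans hp'a.symm)).symm
    · rw [hinj hp hp' heq]
    · exact (hS p hp p' hp' q' hq' hq'p' hgt).red_eq_of_col_eq (hp'a.trans hpa.symm)
        (hq'a.trans hpa.symm)
  · exact ⟨true, fun p hp hpa hq => absurd ⟨p, hp, hpa, hq⟩ h⟩

theorem exists_two_cols (hS : TriangleFree col red ord S) (hinj : Set.InjOn ord S)
    (hne : S.Nonempty) (hspread : ∀ a, ∃ p ∈ S, col p ≠ a) :
    ∃ c₁ c₂ : Fin 3, c₁ ≠ c₂ ∧ (∀ p ∈ S, col p = c₁ ∨ col p = c₂) ∧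
      (∃ p ∈ S, col p = c₁) ∧ (∃ p ∈ S, col p = c₂) := by
  obtain ⟨p₁, hp₁⟩ := hne
  obtain ⟨p₂, hp₂, hne⟩ := hspread (col p₁)
  refine ⟨col p₁, col p₂, Ne.symm hne, fun p hp => ?_, ⟨p₁, hp₁, rfl⟩, ⟨p₂, hp₂, rfl⟩⟩
  by_contra! h
  exact hS.not_three_cols hinj hp hp₁ hp₂ h.1 h.2 (Ne.symm hne)

theorem insert_of_upperColor_true [DecidableEq α] (hS : TriangleFree col red ord S)
    (hcol : ∀ p ∈ S, col p = a) (hup : UpperColor col red ord S a true) {v : α}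
    (hv : col v = a + 1) : TriangleFree col red ord (insert v S) := by
  intro x hx y hy z hz hzy hyx
  simp only [Finset.mem_insert] at hx hy hz
  rcases hx with rfl | hx <;> rcases hy with rfl | hy <;> rcases hz with rfl | hz
  any_goals omega
  · have hred := hup y hy (hcol y hy) ⟨z, hz, hcol z hz, hzy⟩
    simp [MissingTriple, hv, hcol y hy, hcol z hz, hred]
  · have hred := hup x hx (hcol x hx) ⟨z, hz, hcol z hz, hzy.trans hyx⟩
    simp [MissingTriple, hv, hcol x hx, hcol z hz, hred]
  · have hred := hup x hx (hcol x hx) ⟨y, hy, hcol y hy, hyx⟩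
    simp [MissingTriple, hv, hcol x hx, hcol y hy, hred]
  · exact hS x hx y hy z hz hzy hyx

theorem insert_of_upperColor_false [DecidableEq α] (hS : TriangleFree col red ord S)
    (hcol : ∀ p ∈ S, col p = a) (hup : UpperColor col red ord S a false) {v : α}
    (hv : col v = a + 2) : TriangleFree col red ord (insert v S) := by
  have hv' : -col v = -a + 1 := by grind
  exact triangleFree_neg_not_iff.mp <|
    (triangleFree_neg_not_iff.mpr hS).insert_of_upperColor_true
      (fun p hp => congrArg Neg.neg (hcol p hp)) (upperColor_neg_not_iff.mpr hup) hv'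

theorem exists_col_insert [DecidableEq α] (hS : TriangleFree col red ord S)
    (hinj : Set.InjOn ord S) (hcol : ∀ p ∈ S, col p = a) :
    ∃ d ≠ a, ∀ v, col v = d → TriangleFree col red ord (insert v S) := by
  obtain ⟨b, hup⟩ := hS.exists_upperColor hinj a
  cases b
  · exact ⟨a + 2, by simp, fun v hv => hS.insert_of_upperColor_false hcol hup hv⟩
  · exact ⟨a + 1, by simp, fun v hv => hS.insert_of_upperColor_true hcol hup hv⟩

theorem upperColor_true_of_lt (hS : TriangleFree col red ord S) (hinj : Set.InjOn ord S)
    {r₁ r₂ : α} (hr₁ : r₁ ∈ S) (hr₂ : r₂ ∈ S) (hr₁a : col r₁ = a + 1) (hr₂a : col r₂ = a + 1)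
    (hr : ord r₁ < ord r₂) : UpperColor col red ord S a true := by
  rintro p hp hpa ⟨q, hq, hqa, hqp⟩
  have hne : ∀ x ∈ S, col x = a → ord x ≠ ord r₁ := fun x hx hxa h => by
    have := congrArg col (hinj hx hr₁ h)
    grind
  rcases (hne p hp hpa).lt_or_gt with hpr | hrp
  · have hblue : red r₂ = false :=
      (hS r₂ hr₂ r₁ hr₁ p hp hpr hr).blue_of_col_col_left (hr₁a.trans hr₂a.symm)
        (by rw [hr₂a, hpa])
    exact (hS r₂ hr₂ p hp q hq hqp (hpr.trans hr)).red_of_blue_right (by rw [hr₂a, hpa])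
      (hqa.trans hpa.symm) hblue
  · rcases (hne q hq hqa).lt_or_gt with hqr | hrq
    · exact (hS p hp r₁ hr₁ q hq hqr hrp).red_of_col_right_col (by rw [hr₁a, hpa])
        (hqa.trans hpa.symm)
    · exact (hS p hp q hq r₁ hr₁ hrq hqp).red_of_col_col_right (hqa.trans hpa.symm)
        (by rw [hr₁a, hpa])

theorem upperColor_false_of_lt (hS : TriangleFree col red ord S) (hinj : Set.InjOn ord S)
    {s₁ s₂ : α} (hs₁ : s₁ ∈ S) (hs₂ : s₂ ∈ S) (hs₁a : col s₁ = a) (hs₂a : col s₂ = a)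
    (hs : ord s₁ < ord s₂) : UpperColor col red ord S (a + 1) false := by
  have hrefl : -a = -(a + 1) + 1 := by abel
  exact upperColor_neg_not_iff.mp <| (triangleFree_neg_not_iff.mpr hS).upperColor_true_of_lt hinj
    hs₁ hs₂ (by rw [hs₁a, hrefl]) (by rw [hs₂a, hrefl]) hs

end TriangleFree

end TriangleFree

namespace Cons3

variable {n : ℕ} {C : Cons3 n} {S : Finset (ℕ × Fin 3)}

theorem injOn_ord (hSV : S ⊆ C.V) : Set.InjOn C.ord S :=
  fun p hp q hq h => C.ord_inj p (hSV hp) q (hSV hq) h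

namespace EmptyCluster

theorem triangleFree (hS : C.EmptyCluster S) : TriangleFree Prod.snd C.red C.ord S :=
  hS.2.2.1

theorem not_triangleFree_insert (hS : C.EmptyCluster S) {v : ℕ × Fin 3} (hv : v ∈ C.V)
    (hvS : v ∉ S) : ¬ TriangleFree Prod.snd C.red C.ord (insert v S) := by
  obtain ⟨x, hx, y, hy, z, hz, hzy, hyx, hnm⟩ := hS.2.2.2 v hv hvS
  exact fun h => hnm (h x hx y hy z hz hzy hyx)

theorem exists_col_ne (hS : C.EmptyCluster S) (hrow : 1 < (n + 2) / 3) (a : Fin 3) :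
    ∃ p ∈ S, p.2 ≠ a := by
  by_contra! hcol
  obtain ⟨d, hda, hd⟩ := hS.triangleFree.exists_col_insert (injOn_ord hS.1) hcol
  exact hS.not_triangleFree_insert (C.full 0 hrow d) (fun h => hda (hcol _ h)) (hd (0, d) rfl)

end EmptyCluster

end Cons3

theorem emptysettypes_general (n k : ℕ) (hk : 2 ≤ k) (hn : n = 3 * k + 1 ∨ n = 3 * k + 2)
    (C : Cons3 n) (S : Finset (ℕ × Fin 3)) (hS : C.EmptyCluster S) :
    (∃ c₁ c₂ : Fin 3, c₁ ≠ c₂ ∧ (∀ p ∈ S, p.2 = c₁ ∨ p.2 = c₂) ∧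
        (∃ p ∈ S, p.2 = c₁) ∧ (∃ p ∈ S, p.2 = c₂)) ∧
      (∀ c : Fin 3, ∃ b : Bool, ∀ p ∈ S, p.2 = c →
        (∃ q ∈ S, q.2 = c ∧ C.lt q p) → C.red p = b) ∧
      (∀ c : Fin 3,
        2 ≤ (S.filter fun p => p.2 = c).card →
        2 ≤ (S.filter fun p => p.2 = c + 1).card →
          (∀ p ∈ S, p.2 = c → (∃ q ∈ S, q.2 = c ∧ C.lt q p) → C.red p = true) ∧
          (∀ p ∈ S, p.2 = c + 1 → (∃ q ∈ S, q.2 = c + 1 ∧ C.lt q p) →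
            C.red p = false)) := by
  have hinj := Cons3.injOn_ord hS.1
  have hrow : 1 < (n + 2) / 3 := by omega
  have hne : S.Nonempty := Finset.card_pos.mp (by have := hS.2.1; omega)
  refine ⟨hS.triangleFree.exists_two_cols hinj hne (hS.exists_col_ne hrow),
    hS.triangleFree.exists_upperColor hinj, fun c hc hc₁ => ?_⟩
  obtain ⟨r₁, hr₁, r₂, hr₂, hr₁c, hr₂c, hr⟩ := exists_lt_of_two_le_card hinj hc₁
  obtain ⟨s₁, hs₁, s₂, hs₂, hs₁c, hs₂c, hs⟩ := exists_lt_of_two_le_card hinj hc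
  exact ⟨hS.triangleFree.upperColor_true_of_lt hinj hr₁ hr₂ hr₁c hr₂c hr,
    hS.triangleFree.upperColor_false_of_lt hinj hs₁ hs₂ hs₁c hs₂c hs⟩

/-- Lemma `emptysettypes`: in a complex of Construction 4 with `n = 3k + 1` or
`n = 3k + 2` vertices and `k ≥ 2`, every empty cluster `S` has vertices in exactly two
columns; in each of its two columns all of its vertices except possibly the lowest
share one color; and if both columns contain at least two vertices of `S`, then the
left column's color is red and the right column's color is blue. -/
theorem emptysettypes (n k : ℕ) (hk : 2 ≤ k) (hn : n = 3 * k + 1 ∨ n = 3 * k + 2)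
    (C : Cons3 n) (h4 : C.Cond4) (S : Finset (ℕ × Fin 3)) (hS : C.EmptyCluster S) :
    (∃ c₁ c₂ : Fin 3, c₁ ≠ c₂ ∧ (∀ p ∈ S, p.2 = c₁ ∨ p.2 = c₂) ∧
        (∃ p ∈ S, p.2 = c₁) ∧ (∃ p ∈ S, p.2 = c₂)) ∧
      (∀ c : Fin 3, ∃ b : Bool, ∀ p ∈ S, p.2 = c →
        (∃ q ∈ S, q.2 = c ∧ C.lt q p) → C.red p = b) ∧
      (∀ c : Fin 3,
        2 ≤ (S.filter fun p => p.2 = c).card →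
        2 ≤ (S.filter fun p => p.2 = c + 1).card →
          (∀ p ∈ S, p.2 = c → (∃ q ∈ S, q.2 = c ∧ C.lt q p) → C.red p = true) ∧
          (∀ p ∈ S, p.2 = c + 1 → (∃ q ∈ S, q.2 = c + 1 ∧ C.lt q p) →
            C.red p = false)) :=
  emptysettypes_general n k hk hn C S hS
end
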